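/- arXiv:2103.02483 — 2 statements merged into one kernel-verified Lean document; each statement's English description precedes it below -/
import Mathlib

section
/- If (u, v) is a rational point on Y² = X³ - N²X with u ≠ 0 and v ≠ 0, then a = |v/u|, b = 2N/a, h = |(u² + N²)/v| are the sides of a right triangle with area N, i.e., a² + b² = h² and ab/2 = N. -/
theorem sq_add_sq_eq_sq_of_congruent_curve {K : Type*} [Field K] {N u v : K}
    (hcurve : v ^ 2 = u ^ 3 - N ^ 2 * u) (hu : u ≠ 0) (hv : v ≠ 0) :
    (v / u) ^ 2 + (2 * N / (v / u)) ^ 2 = ((u ^ 2 + N ^ 2) / v) ^ 2 := by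
  field_simp
  -- multiplied by `u²v²`, the identity reads `v⁴ = (u³ - N²u)²`
  linear_combination (v ^ 2 + u ^ 3 - N ^ 2 * u) * hcurve

theorem stmt_2_general (N : ℕ) (u v : ℚ)
    (hcurve : v ^ 2 = u ^ 3 - N ^ 2 * u) (hu : u ≠ 0) (hv : v ≠ 0) :
    let a := |v / u|
    let b := 2 * N / a
    let h := |(u ^ 2 + N ^ 2) / v|
    a ^ 2 + b ^ 2 = h ^ 2 ∧ a * b / 2 = N := by
  intro a b h
  have ha : a ≠ 0 := abs_ne_zero.mpr (div_ne_zero hv hu)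
  constructor
  · simp only [a, b, h, div_pow _ |v / u|, sq_abs, ← div_pow]
    exact sq_add_sq_eq_sq_of_congruent_curve hcurve hu hv
  · simp only [b]
    field_simp

theorem stmt_2 (N : ℕ) (hN : 0 < N) (u v : ℚ)
    (hcurve : v ^ 2 = u ^ 3 - N ^ 2 * u) (hu : u ≠ 0) (hv : v ≠ 0) :
    let a := |v / u|
    let b := 2 * N / a
    let h := |(u ^ 2 + N ^ 2) / v|
    a ^ 2 + b ^ 2 = h ^ 2 ∧ a * b / 2 = N :=
  stmt_2_general N u v hcurve hu hv
end

section
/- If U, V are rationals with V² = U³ + 4N²U and U ≠ 0, then setting X = V²/(4U²) and Y = V(U² - 4N²)/(8U²), we have Y² = X³ - N²X. -/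
theorem stmt_4 (N : ℕ) (hN : 0 < N) (U V : ℚ)
    (hcurve : V ^ 2 = U ^ 3 + 4 * N ^ 2 * U) (hU : U ≠ 0) :
    let X : ℚ := V ^ 2 / (4 * U ^ 2)
    let Y : ℚ := V * (U ^ 2 - 4 * N ^ 2) / (8 * U ^ 2)
    Y ^ 2 = X ^ 3 - N ^ 2 * X := by
  intro X Y
  have h2 : U ^ 2 ≠ 0 := pow_ne_zero 2 hU
  have hY2 : Y ^ 2 = (U ^ 3 + 4 * N ^ 2 * U) * (U ^ 2 - 4 * N ^ 2) ^ 2 / (64 * U ^ 4) := by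
    show (V * (U ^ 2 - 4 * N ^ 2) / (8 * U ^ 2)) ^ 2 = _
    rw [div_pow, mul_pow, hcurve]; ring
  have hX : X = (U ^ 2 + 4 * N ^ 2) / (4 * U) := by
    show V ^ 2 / (4 * U ^ 2) = _
    rw [hcurve]; field_simp
  rw [hY2, hX]
  field_simp
  ring
end
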